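/- arXiv:2106.04114 — 4 statements merged into one kernel-verified Lean document; each statement's English description precedes it below -/
import Mathlib

section
/- (U_add ≤ U_mult.) Let r ∈ ℝ, σ > 0, λ > 0, T ≥ 1. Let r₁, …, r_T be i.i.d. random variables with distribution N(r, σ²), and let S₁, …, S_T be strictly positive random variables such that S_t is measurable with respect to r₁, …, r_{t−1} (as in geometric Brownian motion). Set a_t = r_t·S_t², and assume Σ_t a_t² > 0 almost surely. Then U_add := (r²/(2λσ²T))·E[ ((Σ_t a_t)²/(Σ_t a_t²))·Θ(Σ_t a_t) ] ≤ (r²/(2λσ²))·Φ(r/σ) =: U_mult. -/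
/-!
On the event `Σ a_t > 0`, dropping the non-positive `a_t` only increases `Σ a_t`, and
Cauchy–Schwarz over the `k` positive ones gives `(Σ a_t)² ≤ k · Σ a_t²`. Hence the integrand
is at most `#{t | a_t > 0} = Σ_t Θ(r_t)` (as `S_t > 0`), whose expectation is `T · Φ(r/σ)`
because `P(r_t > 0) = Φ(r/σ)` for `r_t ∼ N(r, σ²)`.
-/

open MeasureTheory ProbabilityTheory

/-- The cumulative distribution function `Φ` of the standard normal distribution. -/
noncomputable def stdNormalCDF (x : ℝ) : ℝ :=
  ((gaussianReal 0 1) (Set.Iic x)).toReal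

/-- The Heaviside step function: `Θ(x) = 1` if `x > 0` and `0` otherwise. -/
noncomputable def heaviside (x : ℝ) : ℝ := if 0 < x then 1 else 0

open NNReal Finset

lemma heaviside_eq_indicator : heaviside = (Set.Ioi 0).indicator 1 := by
  ext x
  simp [heaviside, Set.indicator_apply]

lemma heaviside_nonneg (x : ℝ) : 0 ≤ heaviside x := by
  unfold heaviside; split <;> norm_num

lemma measurable_heaviside : Measurable heaviside := by
  rw [heaviside_eq_indicator]
  exact measurable_one.indicator measurableSet_Ioi

lemma heaviside_mul_of_pos {x c : ℝ} (hc : 0 < c) : heaviside (x * c) = heaviside x := by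
  simp only [heaviside, mul_pos_iff_of_pos_right hc]

lemma sum_heaviside_eq_card_filter {ι : Type*} (s : Finset ι) (a : ι → ℝ) :
    ∑ i ∈ s, heaviside (a i) = #{i ∈ s | 0 < a i} := by
  simp [heaviside]

lemma sq_sum_div_sum_sq_mul_heaviside_le {ι : Type*} (s : Finset ι) (a : ι → ℝ) :
    (∑ i ∈ s, a i) ^ 2 / (∑ i ∈ s, a i ^ 2) * heaviside (∑ i ∈ s, a i)
      ≤ ∑ i ∈ s, heaviside (a i) := by
  rcases le_or_gt (∑ i ∈ s, a i) 0 with hnonpos | hpos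
  · rw [heaviside, if_neg hnonpos.not_gt, mul_zero]
    exact sum_nonneg fun i _ ↦ heaviside_nonneg _
  set P := {i ∈ s | 0 < a i}
  have hsum_le : ∑ i ∈ s, a i ≤ ∑ i ∈ P, a i := by
    rw [← sum_filter_add_sum_filter_not s (0 < a ·)]
    exact add_le_of_nonpos_right (sum_nonpos fun i hi ↦ not_lt.1 (mem_filter.1 hi).2)
  have hsq_pos : 0 < ∑ i ∈ s, a i ^ 2 := by
    obtain ⟨i, hi, hai⟩ := exists_ne_zero_of_sum_ne_zero hpos.ne'
    exact sum_pos' (fun j _ ↦ sq_nonneg _) ⟨i, hi, by positivity⟩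
  rw [heaviside, if_pos hpos, mul_one, sum_heaviside_eq_card_filter, div_le_iff₀ hsq_pos]
  calc (∑ i ∈ s, a i) ^ 2 ≤ (∑ i ∈ P, a i) ^ 2 := pow_le_pow_left₀ hpos.le hsum_le 2
    _ ≤ (#P : ℝ) * ∑ i ∈ P, a i ^ 2 := sq_sum_le_card_mul_sum_sq
    _ ≤ (#P : ℝ) * ∑ i ∈ s, a i ^ 2 := by
      gcongr
      exact filter_subset _ s

lemma gaussianReal_real_Ioi_zero {m σ : ℝ} {v : ℝ≥0} (hσ : 0 < σ) (hv : (v : ℝ) = σ ^ 2) :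
    (gaussianReal m v).real (Set.Ioi 0) = stdNormalCDF (m / σ) := by
  have hstd : (gaussianReal m v).map (fun x ↦ (m - x) / σ) = gaussianReal 0 1 := by
    rw [show (fun x ↦ (m - x) / σ) = (· / σ) ∘ (m - ·) from rfl,
      ← Measure.map_map (by fun_prop) (by fun_prop), gaussianReal_map_const_sub,
      gaussianReal_map_div_const, sub_self, zero_div]
    congr
    ext
    simp [hv, hσ.ne']
  have hpre : (fun x ↦ (m - x) / σ) ⁻¹' Set.Iio (m / σ) = Set.Ioi 0 := by
    ext x
    simp [div_lt_div_iff_of_pos_right hσ]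
  rw [stdNormalCDF, ← measure_congr (Iio_ae_eq_Iic'
      (gaussianReal_absolutelyContinuous 0 one_ne_zero (measure_singleton _))),
    ← hstd, Measure.map_apply (by fun_prop) measurableSet_Iio, hpre, measureReal_def]

namespace ProbabilityTheory.HasLaw

variable {Ω : Type*} [MeasurableSpace Ω] {μ : Measure Ω} {X : Ω → ℝ}

lemma integrable_heaviside_comp {ν : Measure ℝ} [IsFiniteMeasure ν] (hX : HasLaw X ν μ) :
    Integrable (fun ω ↦ heaviside (X ω)) μ := by
  refine (integrable_map_measure measurable_heaviside.aestronglyMeasurable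
    hX.aemeasurable).1 ?_
  rw [hX.map_eq, heaviside_eq_indicator]
  exact (integrable_const 1).indicator measurableSet_Ioi

lemma integral_heaviside_comp {m σ : ℝ} {v : ℝ≥0} (hσ : 0 < σ) (hv : (v : ℝ) = σ ^ 2)
    (hX : HasLaw X (gaussianReal m v) μ) :
    ∫ ω, heaviside (X ω) ∂μ = stdNormalCDF (m / σ) := by
  rw [← Function.comp_def, hX.integral_comp measurable_heaviside.aestronglyMeasurable,
    heaviside_eq_indicator, integral_indicator_one measurableSet_Ioi,
    gaussianReal_real_Ioi_zero hσ hv]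

end ProbabilityTheory.HasLaw

theorem additive_le_multiplicative_utility_general {Ω : Type*} [MeasurableSpace Ω]
    (μ : Measure Ω)
    (r σ lam : ℝ) (hσ : 0 < σ) (hlam : 0 < lam)
    (T : ℕ) (hT : 1 ≤ T)
    (R : Fin T → Ω → ℝ)
    (hmap : ∀ t, Measure.map (R t) μ = gaussianReal r ⟨σ ^ 2, sq_nonneg σ⟩)
    (S : Fin T → Ω → ℝ) (hSpos : ∀ t, ∀ ω, 0 < S t ω) :
    (r ^ 2 / (2 * lam * σ ^ 2 * T))
        * ∫ ω, ((∑ t, R t ω * (S t ω) ^ 2) ^ 2 / (∑ t, (R t ω * (S t ω) ^ 2) ^ 2))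
            * heaviside (∑ t, R t ω * (S t ω) ^ 2) ∂μ
      ≤ (r ^ 2 / (2 * lam * σ ^ 2)) * stdNormalCDF (r / σ) := by
  -- `⟨σ ^ 2, _⟩` elaborates at the subtype `{x // 0 ≤ x}`, where `ℝ≥0` instances are not found.
  obtain ⟨v, hv, hmap⟩ : ∃ v : ℝ≥0, (v : ℝ) = σ ^ 2 ∧ ∀ t, μ.map (R t) = gaussianReal r v :=
    ⟨_, rfl, hmap⟩
  have hlaw t : HasLaw (R t) (gaussianReal r v) μ :=
    ⟨.of_map_ne_zero (by rw [hmap t]; exact IsProbabilityMeasure.ne_zero _), hmap t⟩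
  have hpointwise ω : (∑ t, R t ω * S t ω ^ 2) ^ 2 / (∑ t, (R t ω * S t ω ^ 2) ^ 2)
      * heaviside (∑ t, R t ω * S t ω ^ 2) ≤ ∑ t, heaviside (R t ω) :=
    (sq_sum_div_sum_sq_mul_heaviside_le univ _).trans_eq
      (sum_congr rfl fun t _ ↦ heaviside_mul_of_pos (pow_pos (hSpos t ω) 2))
  have hexpect : ∫ ω, ∑ t, heaviside (R t ω) ∂μ = T * stdNormalCDF (r / σ) := by
    rw [integral_finsetSum _ fun t _ ↦ (hlaw t).integrable_heaviside_comp]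
    simp [(hlaw _).integral_heaviside_comp hσ hv]
  have hbound := integral_mono_of_nonneg
    (.of_forall fun ω ↦ mul_nonneg (by positivity) (heaviside_nonneg _))
    (integrable_finsetSum _ fun t _ ↦ (hlaw t).integrable_heaviside_comp) (.of_forall hpointwise)
  have hT0 : (T : ℝ) ≠ 0 := by positivity
  calc _ ≤ r ^ 2 / (2 * lam * σ ^ 2 * T) * (T * stdNormalCDF (r / σ)) :=
        mul_le_mul_of_nonneg_left (hbound.trans_eq hexpect) (by positivity)
    _ = r ^ 2 / (2 * lam * σ ^ 2) * stdNormalCDF (r / σ) := by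
        field_simp

/-- (`U_add ≤ U_mult`.) Let `r₁, …, r_T` be i.i.d. `N(r, σ²)`, and `S₁, …, S_T` strictly
positive with `S_t` measurable w.r.t. `r₁, …, r_{t−1}`; set `a_t = r_t S_t²` and assume
`Σ a_t² > 0` a.s. Then
`U_add = (r²/(2λσ²T))·E[((Σ a_t)²/(Σ a_t²))·Θ(Σ a_t)] ≤ (r²/(2λσ²))·Φ(r/σ) = U_mult`. -/
theorem additive_le_multiplicative_utility {Ω : Type*} [MeasurableSpace Ω]
    (μ : Measure Ω) [IsProbabilityMeasure μ]
    (r σ lam : ℝ) (hσ : 0 < σ) (hlam : 0 < lam)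
    (T : ℕ) (hT : 1 ≤ T)
    (R : Fin T → Ω → ℝ) (hRmeas : ∀ t, Measurable (R t))
    (hindep : iIndepFun R μ)
    (hmap : ∀ t, Measure.map (R t) μ = gaussianReal r ⟨σ ^ 2, sq_nonneg σ⟩)
    (S : Fin T → Ω → ℝ) (hSpos : ∀ t, ∀ ω, 0 < S t ω)
    (hSmeas : ∀ t : Fin T,
      Measurable[⨆ s : {s : Fin T // s < t}, MeasurableSpace.comap (R s.1) inferInstance]
        (S t))
    (hsq : ∀ᵐ ω ∂μ, 0 < ∑ t, (R t ω * (S t ω) ^ 2) ^ 2) :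
    (r ^ 2 / (2 * lam * σ ^ 2 * T))
        * ∫ ω, ((∑ t, R t ω * (S t ω) ^ 2) ^ 2 / (∑ t, (R t ω * (S t ω) ^ 2) ^ 2))
            * heaviside (∑ t, R t ω * (S t ω) ^ 2) ∂μ
      ≤ (r ^ 2 / (2 * lam * σ ^ 2)) * stdNormalCDF (r / σ) :=
  additive_le_multiplicative_utility_general μ r σ lam hσ hlam T hT R hmap S hSpos
end

section
/- (U_no-aug < U_mult.) Let r > 0, σ > 0 and λ > 0. Then (1 − 2Φ(−r/σ))·r − (λ/2)σ² < (r²/(2λσ²))·Φ(r/σ). That is, the expected true utility of the no-data-augmentation strategy is strictly smaller than the expected true utility of the optimally-tuned multiplicative Gaussian noise augmentation strategy. -/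
/-! Writing `p = Φ(r/σ)` and `a = λσ²`, the symmetry `Φ(-x) = 1 - Φ(x)` turns the claim into
`(2p - 1) r - a/2 < r² p / (2a)`. By AM-GM, `(2p - 1) r ≤ a/2 + (2p - 1)² r² / (2a)`, and
`(2p - 1)² < p` since `(4p - 1)(p - 1) < 0` for `1/2 ≤ p < 1`. -/

open MeasureTheory ProbabilityTheory

namespace ProbabilityTheory

variable {μ : Measure ℝ} [IsProbabilityMeasure μ]

lemma cdf_neg_of_map_neg_eq [NullSingletonClass μ] (hμ : μ.map (fun x ↦ -x) = μ) (x : ℝ) :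
    cdf μ (-x) = 1 - cdf μ x := by
  have h_reflect : μ.real (Set.Iic (-x)) = μ.real (Set.Ici x) := by
    conv_lhs => rw [← hμ]
    rw [map_measureReal_apply measurable_neg measurableSet_Iic, Set.neg_preimage, Set.neg_Iic,
      neg_neg]
  rw [cdf_eq_real, cdf_eq_real, h_reflect, ← measureReal_congr Ioi_ae_eq_Ici, ← Set.compl_Iic,
    probReal_compl_eq_one_sub measurableSet_Iic]

lemma cdf_zero_of_map_neg_eq [NullSingletonClass μ] (hμ : μ.map (fun x ↦ -x) = μ) :
    cdf μ 0 = 1 / 2 := by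
  have h := cdf_neg_of_map_neg_eq hμ 0
  rw [neg_zero] at h
  linarith

lemma cdf_lt_one_of_absolutelyContinuous (hμ : volume ≪ μ) (x : ℝ) : cdf μ x < 1 := by
  have h_tail : 0 < μ.real (Set.Ioi x) :=
    ENNReal.toReal_pos (fun h ↦ by simpa using hμ h) (measure_ne_top μ _)
  rw [← Set.compl_Iic, probReal_compl_eq_one_sub measurableSet_Iic, ← cdf_eq_real] at h_tail
  linarith

end ProbabilityTheory

lemma stdNormalCDF_eq_cdf : stdNormalCDF = cdf (gaussianReal 0 1) := by
  ext x
  rw [cdf_eq_real, measureReal_def, stdNormalCDF]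

lemma map_neg_gaussianReal_zero (v : NNReal) :
    (gaussianReal 0 v).map (fun x ↦ -x) = gaussianReal 0 v := by
  rw [gaussianReal_map_neg, neg_zero]

lemma stdNormalCDF_neg (x : ℝ) : stdNormalCDF (-x) = 1 - stdNormalCDF x := by
  have := nullSingletonClass_gaussianReal (μ := 0) one_ne_zero
  rw [stdNormalCDF_eq_cdf]
  exact cdf_neg_of_map_neg_eq (map_neg_gaussianReal_zero 1) x

lemma half_le_stdNormalCDF {x : ℝ} (hx : 0 ≤ x) : 1 / 2 ≤ stdNormalCDF x := by
  have := nullSingletonClass_gaussianReal (μ := 0) one_ne_zero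
  rw [stdNormalCDF_eq_cdf, ← cdf_zero_of_map_neg_eq (map_neg_gaussianReal_zero 1)]
  exact monotone_cdf _ hx

lemma stdNormalCDF_lt_one (x : ℝ) : stdNormalCDF x < 1 := by
  rw [stdNormalCDF_eq_cdf]
  exact cdf_lt_one_of_absolutelyContinuous (gaussianReal_absolutelyContinuous' 0 one_ne_zero) x

lemma le_half_add_sq_div {a : ℝ} (ha : 0 < a) (b : ℝ) : b ≤ a / 2 + b ^ 2 / (2 * a) := by
  rw [div_add_div _ _ two_ne_zero (by positivity), le_div_iff₀ (by positivity)]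
  nlinarith [sq_nonneg (a - b)]

lemma sq_two_mul_sub_one_lt {p : ℝ} (hp : 1 / 4 < p) (hp1 : p < 1) : (2 * p - 1) ^ 2 < p := by
  nlinarith

lemma two_mul_sub_one_mul_sub_half_lt {p r a : ℝ} (hp : 1 / 4 < p) (hp1 : p < 1) (hr : 0 < r)
    (ha : 0 < a) : (2 * p - 1) * r - a / 2 < r ^ 2 / (2 * a) * p := by
  have h_sq : ((2 * p - 1) * r) ^ 2 < r ^ 2 * p := by
    rw [mul_pow, mul_comm]
    exact mul_lt_mul_of_pos_left (sq_two_mul_sub_one_lt hp hp1) (by positivity)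
  calc (2 * p - 1) * r - a / 2 ≤ ((2 * p - 1) * r) ^ 2 / (2 * a) := by
        linarith [le_half_add_sq_div ha ((2 * p - 1) * r)]
    _ < r ^ 2 * p / (2 * a) := div_lt_div_of_pos_right h_sq (by positivity)
    _ = r ^ 2 / (2 * a) * p := by ring

/-- (`U_no-aug < U_mult`.) For `r, σ, λ > 0`, the expected true utility of the
no-data-augmentation strategy is strictly smaller than that of the optimally-tuned
multiplicative Gaussian noise augmentation strategy:
`(1 − 2Φ(−r/σ))·r − (λ/2)σ² < (r²/(2λσ²))·Φ(r/σ)`. -/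
theorem no_augmentation_lt_multiplicative_utility
    (r σ lam : ℝ) (hr : 0 < r) (hσ : 0 < σ) (hlam : 0 < lam) :
    (1 - 2 * stdNormalCDF (-r / σ)) * r - (lam / 2) * σ ^ 2
      < (r ^ 2 / (2 * lam * σ ^ 2)) * stdNormalCDF (r / σ) := by
  have h_half : 1 / 2 ≤ stdNormalCDF (r / σ) := half_le_stdNormalCDF (div_pos hr hσ).le
  have h_gap := two_mul_sub_one_mul_sub_half_lt (by linarith) (stdNormalCDF_lt_one (r / σ)) hr
    (by positivity : 0 < lam * σ ^ 2)
  rw [neg_div, stdNormalCDF_neg]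
  convert h_gap using 2 <;> ring
end

section
/- (Optimality of the proposed augmentation for stationary portfolios.) Let r > 0, σ > 0, λ > 0, T ≥ 1, let r₁, …, r_T be strictly positive real numbers and S₁, …, S_T strictly positive real numbers. Set the injected-noise variances γ_t² = (σ²/(2r))·r_t·S_t². Then the stationary portfolio obtained by training with this augmentation, π* = (Σ_t r_t)/(2λ·Σ_t γ_t²/S_t²), equals r/(λσ²), and consequently for every π ∈ ℝ, π*·r − (λ/2)σ²(π*)² ≥ π·r − (λ/2)σ²π²; i.e., the trained stationary portfolio maximizes the true utility among all stationary portfolios. -/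
/-!
With `γ_t² = (σ²/(2r)) r_t S_t²` the denominator `Σ γ_t²/S_t²` is `σ²/(2r) · Σ r_t`, so the
`Σ r_t` cancel and the trained weight is the Merton fraction `r/(λσ²)`, the vertex of the concave
quadratic utility.
-/

open Finset

/-- The true utility of the stationary portfolio `π` under geometric Brownian motion. -/
noncomputable def stationaryUtility (r σ lam π : ℝ) : ℝ :=
  π * r - (lam / 2) * σ ^ 2 * π ^ 2

theorem stationaryUtility_sub_stationaryUtility_merton (r σ lam π : ℝ) (hlam : lam ≠ 0)
    (hσ : σ ≠ 0) :
    stationaryUtility r σ lam (r / (lam * σ ^ 2)) - stationaryUtility r σ lam π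
      = (lam * σ ^ 2 / 2) * (π - r / (lam * σ ^ 2)) ^ 2 := by
  unfold stationaryUtility
  field_simp
  ring

theorem stationaryUtility_le_merton (r σ lam π : ℝ) (hlam : 0 < lam) (hσ : σ ≠ 0) :
    stationaryUtility r σ lam π ≤ stationaryUtility r σ lam (r / (lam * σ ^ 2)) := by
  have hgap := stationaryUtility_sub_stationaryUtility_merton r σ lam π hlam.ne' hσ
  have : 0 ≤ (lam * σ ^ 2 / 2) * (π - r / (lam * σ ^ 2)) ^ 2 := by positivity
  linarith

theorem sum_noise_div_sq_eq {ι : Type*} (s : Finset ι) (c : ℝ) (ret S γsq : ι → ℝ)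
    (hS : ∀ t ∈ s, S t ≠ 0) (hγsq : ∀ t ∈ s, γsq t = c * ret t * S t ^ 2) :
    ∑ t ∈ s, γsq t / S t ^ 2 = c * ∑ t ∈ s, ret t := by
  rw [mul_sum]
  refine sum_congr rfl fun t ht => ?_
  rw [hγsq t ht, mul_div_cancel_right₀ _ (pow_ne_zero 2 (hS t ht))]

theorem div_two_mul_mul_div_two_mul_mul_self (r σ lam x : ℝ) (hx : x ≠ 0) :
    x / (2 * lam * (σ ^ 2 / (2 * r) * x)) = r / (lam * σ ^ 2) := by
  rw [← mul_assoc, div_mul_cancel_right₀ hx]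
  simp only [div_eq_mul_inv, mul_inv, inv_inv]
  ring

theorem proposed_augmentation_stationary_optimal_general
    (r σ lam : ℝ) (hσ : 0 < σ) (hlam : 0 < lam)
    (T : ℕ) (hT : 1 ≤ T)
    (ret : Fin T → ℝ) (hret : ∀ t, 0 < ret t)
    (S : Fin T → ℝ) (hS : ∀ t, 0 < S t)
    (γsq : Fin T → ℝ) (hγsq : ∀ t, γsq t = (σ ^ 2 / (2 * r)) * ret t * (S t) ^ 2) :
    (∑ t, ret t) / (2 * lam * ∑ t, γsq t / (S t) ^ 2) = r / (lam * σ ^ 2) ∧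
    ∀ π : ℝ,
      π * r - (lam / 2) * σ ^ 2 * π ^ 2
        ≤ ((∑ t, ret t) / (2 * lam * ∑ t, γsq t / (S t) ^ 2)) * r
          - (lam / 2) * σ ^ 2 * ((∑ t, ret t) / (2 * lam * ∑ t, γsq t / (S t) ^ 2)) ^ 2 := by
  have hnonempty : (univ : Finset (Fin T)).Nonempty := univ_nonempty_iff.2 ⟨⟨0, hT⟩⟩
  have hret_sum : 0 < ∑ t, ret t := sum_pos (fun t _ => hret t) hnonempty
  have hweight : (∑ t, ret t) / (2 * lam * ∑ t, γsq t / (S t) ^ 2) = r / (lam * σ ^ 2) := by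
    rw [sum_noise_div_sq_eq univ _ ret S γsq (fun t _ => (hS t).ne') (fun t _ => hγsq t)]
    exact div_two_mul_mul_div_two_mul_mul_self r σ lam _ hret_sum.ne'
  refine ⟨hweight, fun π => ?_⟩
  rw [hweight]
  exact stationaryUtility_le_merton r σ lam π hlam hσ.ne'

/-- (Optimality of the proposed augmentation for stationary portfolios.) With
injected-noise variances `γ_t² = (σ²/(2r)) r_t S_t²`, the trained stationary portfolio
`π* = (Σ r_t)/(2λ Σ γ_t²/S_t²)` equals `r/(λσ²)` and maximizes the true utility
`π ↦ π r − (λ/2) σ² π²` among all stationary portfolios. -/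
theorem proposed_augmentation_stationary_optimal
    (r σ lam : ℝ) (hr : 0 < r) (hσ : 0 < σ) (hlam : 0 < lam)
    (T : ℕ) (hT : 1 ≤ T)
    (ret : Fin T → ℝ) (hret : ∀ t, 0 < ret t)
    (S : Fin T → ℝ) (hS : ∀ t, 0 < S t)
    (γsq : Fin T → ℝ) (hγsq : ∀ t, γsq t = (σ ^ 2 / (2 * r)) * ret t * (S t) ^ 2) :
    (∑ t, ret t) / (2 * lam * ∑ t, γsq t / (S t) ^ 2) = r / (lam * σ ^ 2) ∧
    ∀ π : ℝ,
      π * r - (lam / 2) * σ ^ 2 * π ^ 2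
        ≤ ((∑ t, ret t) / (2 * lam * ∑ t, γsq t / (S t) ^ 2)) * r
          - (lam / 2) * σ ^ 2 * ((∑ t, ret t) / (2 * lam * ∑ t, γsq t / (S t) ^ 2)) ^ 2 :=
  proposed_augmentation_stationary_optimal_general r σ lam hσ hlam T hT ret hret S hS γsq hγsq
end

section
/- (Noise injection on the target return is equivalent to an L2 output regularization.) Let r ∈ ℝ, c ≥ 0, σ̂ ≥ 0, let ε be a standard normal random variable, and let Y be a square-integrable real random variable independent of ε (Y is the portfolio output π, which depends only on the noisified past returns). Set Z = r + c·σ̂·√|r|·ε (the noisified target return). Then Var(Z·Y) = r²·Var(Y) + c²·σ̂²·|r|·E[Y²]. In particular, if Y = π is deterministic, then Var(Z·π) = c²·σ̂²·|r|·π², so the risk term contributed by the target-noise injection equals an L2 penalty λ·c²·σ̂²·|r|·π² on the model output. -/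
open MeasureTheory ProbabilityTheory

/-! For independent square-integrable `X` and `Y`, the squares `X²` and `Y²` are independent too,
so `Var(XY) = E[X²] E[Y²] - (E X)² (E Y)² = Var X · E[Y²] + (E X)² · Var Y`. For the
noisified return `X = r + a ε` with `a = c σ̂ √|r|` and `ε` standard normal, `E X = r` and
`Var X = a² = c² σ̂² |r|`. -/

namespace ProbabilityTheory

variable {Ω : Type*} [MeasurableSpace Ω] {μ : Measure Ω}

lemma HasLaw.memLp_two_of_gaussianReal {ε : Ω → ℝ} {m : ℝ} {v : NNReal}
    (hε : HasLaw ε (gaussianReal m v) μ) : MemLp ε 2 μ := by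
  have := memLp_id_gaussianReal (μ := m) (v := v) 2
  rw [← hε.map_eq] at this
  exact (memLp_map_measure_iff aestronglyMeasurable_id hε.aemeasurable).1 this

variable [IsProbabilityMeasure μ]

lemma IndepFun.variance_fun_mul {X Y : Ω → ℝ} (hXY : IndepFun X Y μ) (hX : MemLp X 2 μ)
    (hY : MemLp Y 2 μ) :
    Var[fun ω => X ω * Y ω; μ]
      = Var[X; μ] * ∫ ω, Y ω ^ 2 ∂μ + (∫ ω, X ω ∂μ) ^ 2 * Var[Y; μ] := by
  have hXY_sq : IndepFun (fun ω => X ω ^ 2) (fun ω => Y ω ^ 2) μ :=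
    hXY.comp (measurable_id.pow_const 2) (measurable_id.pow_const 2)
  have hXY_mem : MemLp (fun ω => X ω * Y ω) 2 μ := by
    refine (memLp_two_iff_integrable_sq (f := fun ω => X ω * Y ω) (hX.1.mul hY.1)).2 ?_
    simpa only [mul_pow, Pi.mul_def] using hXY_sq.integrable_mul hX.integrable_sq hY.integrable_sq
  rw [variance_eq_sub hXY_mem, variance_eq_sub hX, variance_eq_sub hY]
  simp only [Pi.pow_apply, mul_pow]
  rw [hXY_sq.integral_fun_mul_eq_mul_integral hX.integrable_sq.1 hY.integrable_sq.1,
    hXY.integral_fun_mul_eq_mul_integral hX.1 hY.1]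
  ring

lemma variance_fun_const_add_mul_mul {ε Y : Ω → ℝ} (hYε : IndepFun Y ε μ)
    (hY : MemLp Y 2 μ) (hε : MemLp ε 2 μ) (hε_mean : μ[ε] = 0) (r a : ℝ) :
    Var[fun ω => (r + a * ε ω) * Y ω; μ]
      = r ^ 2 * Var[Y; μ] + a ^ 2 * Var[ε; μ] * ∫ ω, Y ω ^ 2 ∂μ := by
  have hZY : IndepFun (fun ω => r + a * ε ω) Y μ :=
    (hYε.comp measurable_id ((measurable_const_mul a).const_add r)).symm
  have hZ_mean : ∫ ω, (r + a * ε ω) ∂μ = r := by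
    rw [integral_add (integrable_const r) ((hε.integrable one_le_two).const_mul a),
      integral_const_mul, hε_mean]
    simp
  rw [hZY.variance_fun_mul ((memLp_const r).add (hε.const_mul a)) hY, hZ_mean,
    variance_const_add (hε.1.const_mul a), variance_const_mul]
  ring

end ProbabilityTheory

theorem target_noise_is_output_regularization_general {Ω : Type*} [MeasurableSpace Ω]
    (μ : Measure Ω) [IsProbabilityMeasure μ]
    (r c σhat : ℝ)
    (ε Y : Ω → ℝ)
    (hεmap : Measure.map ε μ = gaussianReal 0 1)
    (hY : MemLp Y 2 μ) (hindep : IndepFun Y ε μ) :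
    variance (fun ω => (r + c * σhat * Real.sqrt |r| * ε ω) * Y ω) μ
      = r ^ 2 * variance Y μ + c ^ 2 * σhat ^ 2 * |r| * ∫ ω, (Y ω) ^ 2 ∂μ ∧
    ∀ π : ℝ,
      variance (fun ω => (r + c * σhat * Real.sqrt |r| * ε ω) * π) μ
        = c ^ 2 * σhat ^ 2 * |r| * π ^ 2 := by
  have hε : HasLaw ε (gaussianReal 0 1) μ :=
    ⟨.of_map_ne_zero (by simp [hεmap, IsProbabilityMeasure.ne_zero]), hεmap⟩
  have hε_mean : μ[ε] = 0 := by rw [hε.integral_eq, integral_id_gaussianReal]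
  have hε_var : Var[ε; μ] = 1 := by rw [hε.variance_eq, variance_id_gaussianReal]; rfl
  have h_noise_sq : (c * σhat * Real.sqrt |r|) ^ 2 = c ^ 2 * σhat ^ 2 * |r| := by
    rw [mul_pow, mul_pow, Real.sq_sqrt (abs_nonneg r)]
  refine ⟨?_, fun π => ?_⟩
  · rw [variance_fun_const_add_mul_mul hindep hY hε.memLp_two_of_gaussianReal hε_mean,
      h_noise_sq, hε_var, mul_one]
  · rw [variance_mul_const, variance_const_add (hε.aemeasurable.const_mul _).aestronglyMeasurable,
      variance_const_mul, hε_var, h_noise_sq, mul_one]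

/-- (Noise injection on the target return is equivalent to an L2 output regularization.)
Let `ε` be standard normal, `Y` square-integrable and independent of `ε`, and
`Z = r + c σ̂ √|r| ε` the noisified target return. Then
`Var(Z·Y) = r² Var(Y) + c² σ̂² |r| E[Y²]`; in particular, for deterministic `Y = π`,
`Var(Z·π) = c² σ̂² |r| π²`. -/
theorem target_noise_is_output_regularization {Ω : Type*} [MeasurableSpace Ω]
    (μ : Measure Ω) [IsProbabilityMeasure μ]
    (r c σhat : ℝ) (hc : 0 ≤ c) (hσhat : 0 ≤ σhat)
    (ε Y : Ω → ℝ) (hε : Measurable ε)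
    (hεmap : Measure.map ε μ = gaussianReal 0 1)
    (hY : MemLp Y 2 μ) (hindep : IndepFun Y ε μ) :
    variance (fun ω => (r + c * σhat * Real.sqrt |r| * ε ω) * Y ω) μ
      = r ^ 2 * variance Y μ + c ^ 2 * σhat ^ 2 * |r| * ∫ ω, (Y ω) ^ 2 ∂μ ∧
    ∀ π : ℝ,
      variance (fun ω => (r + c * σhat * Real.sqrt |r| * ε ω) * π) μ
        = c ^ 2 * σhat ^ 2 * |r| * π ^ 2 :=
  target_noise_is_output_regularization_general μ r c σhat ε Y hεmap hY hindep
end
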